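/- arXiv:1607.00717 — 2 statements merged into one kernel-verified Lean document; each statement's English description precedes it below -/
import Mathlib

section
/- Under the hypotheses of Corollary 2.3, the ADM momenta of (g,K), (ḡ,K̄) = (e^{2βf}g, e^{βf}K), and (g̃,K̃) = (e^{2f}g, e^{f}K) at each end are all equal: P̄ = P̃ = P. -/
open scoped BigOperators
open MeasureTheory Filter Topology

noncomputable section

abbrev En (n : ℕ) := EuclideanSpace ℝ (Fin n)

variable {n : ℕ}

/-- Partial derivative in the `i`-th coordinate direction. -/
def pd (i : Fin n) (h : En n → ℝ) (x : En n) : ℝ :=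
  fderiv ℝ h x (EuclideanSpace.single i 1)

/-- Christoffel symbols of a metric `g` in coordinates. -/
def christoffel (g : En n → Matrix (Fin n) (Fin n) ℝ) (k i j : Fin n) (x : En n) : ℝ :=
  (1/2) * ∑ l, (g x)⁻¹ k l *
    (pd i (fun y => g y j l) x + pd j (fun y => g y i l) x - pd l (fun y => g y i j) x)

/-- Ricci curvature in coordinates. -/
def ricci (g : En n → Matrix (Fin n) (Fin n) ℝ) (i j : Fin n) (x : En n) : ℝ :=
  (∑ k, pd k (christoffel g k i j) x) - (∑ k, pd j (christoffel g k i k) x)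
  + (∑ k, ∑ l, christoffel g k k l x * christoffel g l i j x)
  - (∑ k, ∑ l, christoffel g k j l x * christoffel g l i k x)

/-- Scalar curvature in coordinates. -/
def scalarCurv (g : En n → Matrix (Fin n) (Fin n) ℝ) (x : En n) : ℝ :=
  ∑ i, ∑ j, (g x)⁻¹ i j * ricci g i j x

/-- Squared norm of the gradient of `f` with respect to `g`. -/
def gradSq (g : En n → Matrix (Fin n) (Fin n) ℝ) (f : En n → ℝ) (x : En n) : ℝ :=
  ∑ i, ∑ j, (g x)⁻¹ i j * pd i f x * pd j f x

/-- Hessian of `f` with respect to `g`. -/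
def hess (g : En n → Matrix (Fin n) (Fin n) ℝ) (f : En n → ℝ) (i j : Fin n) (x : En n) : ℝ :=
  pd i (pd j f) x - ∑ k, christoffel g k i j x * pd k f x

/-- Laplace–Beltrami operator of `g` applied to `f` (trace of the Hessian). -/
def laplacian (g : En n → Matrix (Fin n) (Fin n) ℝ) (f : En n → ℝ) (x : En n) : ℝ :=
  ∑ i, ∑ j, (g x)⁻¹ i j * hess g f i j x

/-- Smoothness of a metric (entrywise). -/
def SmoothMetric (g : En n → Matrix (Fin n) (Fin n) ℝ) : Prop :=
  ∀ i j, ContDiff ℝ (⊤ : ℕ∞) (fun x => g x i j)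

/-- `|K|²_g = g^{ik} g^{jl} K_{ij} K_{kl}`. -/
def normSqTensor (g K : En n → Matrix (Fin n) (Fin n) ℝ) (x : En n) : ℝ :=
  ∑ i, ∑ j, ∑ k, ∑ l, (g x)⁻¹ i k * (g x)⁻¹ j l * K x i j * K x k l

/-- `tr_g K = g^{ij} K_{ij}`. -/
def trTensor (g K : En n → Matrix (Fin n) (Fin n) ℝ) (x : En n) : ℝ :=
  ∑ i, ∑ j, (g x)⁻¹ i j * K x i j

/-- The energy density `μ` of an initial data set: `2μ = S − |K|²_g + (tr_g K)²`. -/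
def energyDensity (g K : En n → Matrix (Fin n) (Fin n) ℝ) (x : En n) : ℝ :=
  (1/2) * (scalarCurv g x - normSqTensor g K x + (trTensor g K x)^2)

/-- Raised-index tensor `π^{ij} = K^{ij} − (tr_g K) g^{ij}`. -/
def piUp (g K : En n → Matrix (Fin n) (Fin n) ℝ) (i j : Fin n) (x : En n) : ℝ :=
  (∑ k, ∑ l, (g x)⁻¹ i k * (g x)⁻¹ j l * K x k l) - trTensor g K x * (g x)⁻¹ i j

/-- The momentum density `J^i = ∇_j (K^{ij} − (tr_g K) g^{ij})`, the covariant divergence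
computed in coordinates. -/
def momentumDensity (g K : En n → Matrix (Fin n) (Fin n) ℝ) (i : Fin n) (x : En n) : ℝ :=
  ∑ j, (pd j (fun y => piUp g K i j y) x
    + (∑ k, christoffel g i j k x * piUp g K k j x)
    + (∑ k, christoffel g j j k x * piUp g K i k x))

/-- The `g`-norm of a vector field: `|V|_g = √(g_{ij} V^i V^j)`. -/
def normVec (g : En n → Matrix (Fin n) (Fin n) ℝ) (V : En n → Fin n → ℝ) (x : En n) : ℝ :=
  Real.sqrt (∑ i, ∑ j, g x i j * V x i * V x j)

/-- `(M^n, g, K)` (in a global asymptotically flat coordinate chart of one end) is an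
asymptotically flat initial data set with decay rate `τ`. -/
def IsAFData (n : ℕ) (τ : ℝ) (g K : En n → Matrix (Fin n) (Fin n) ℝ) : Prop :=
  (∀ i j, ContDiff ℝ (⊤ : ℕ∞) fun x => g x i j) ∧ (∀ i j, ContDiff ℝ (⊤ : ℕ∞) fun x => K x i j) ∧
  (∀ x, (g x).PosDef) ∧ (∀ x, (K x).IsSymm) ∧
  max (1/2) ((n : ℝ) - 3) < τ ∧
  ∃ C R ε : ℝ, 0 < C ∧ 0 < R ∧ 0 < ε ∧ ∀ x : En n, R ≤ ‖x‖ →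
    ((∀ i j k, |g x i j - if i = j then (1:ℝ) else 0| + ‖x‖ * |pd k (fun y => g y i j) x|
        + ‖x‖ * |K x i j| ≤ C * ‖x‖ ^ (-τ)) ∧
      |energyDensity g K x| ≤ C * ‖x‖ ^ (-(n : ℝ) - ε) ∧
      normVec g (fun y i => momentumDensity g K i y) x ≤ C * ‖x‖ ^ (-(n : ℝ) - ε))

/-- The decay condition `|f| + r|∇_g f| + r|Δ_g f|^{1/2} ≤ C r^{−τ}` on the end. -/
def AFDecay (n : ℕ) (τ : ℝ) (g : En n → Matrix (Fin n) (Fin n) ℝ) (f : En n → ℝ) : Prop :=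
  ContDiff ℝ (⊤ : ℕ∞) f ∧
  ∃ C R : ℝ, 0 < C ∧ 0 < R ∧ ∀ x : En n, R ≤ ‖x‖ →
    |f x| + ‖x‖ * Real.sqrt (gradSq g f x) + ‖x‖ * Real.sqrt |laplacian g f x| ≤
      C * ‖x‖ ^ (-τ)

/-- The volume of the standard unit `(n−1)`-sphere. -/
def sphereVol (n : ℕ) : ℝ := (μH[(n : ℝ) - 1] (Metric.sphere (0 : En n) 1)).toReal

/-- `E` is the ADM energy of `g` (at the given end, in AF coordinates):
`E = (1/(2(n−1)ω_{n−1})) lim_{r→∞} ∫_{S_r} Σ_{i,j} (g_{ij,i} − g_{ii,j}) ν₀^j dσ_r`. -/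
def HasADMEnergy (n : ℕ) (g : En n → Matrix (Fin n) (Fin n) ℝ) (E : ℝ) : Prop :=
  Tendsto (fun r : ℝ =>
    (1 / (2 * ((n : ℝ) - 1) * sphereVol n)) *
      ∫ x in Metric.sphere (0 : En n) r,
        (∑ i, ∑ j, (pd i (fun y => g y i j) x - pd j (fun y => g y i i) x) * (x j / r))
        ∂(μH[(n : ℝ) - 1])) atTop (𝓝 E)

/-- `P` is the ADM momentum of `(g, K)` (at the given end, in AF coordinates):
`P_i = (1/((n−1)ω_{n−1})) lim_{r→∞} ∫_{S_r} Σ_j (K_{ij} − (tr_g K) g_{ij}) ν₀^j dσ_r`. -/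
def HasADMMomentum (n : ℕ) (g K : En n → Matrix (Fin n) (Fin n) ℝ) (P : Fin n → ℝ) : Prop :=
  ∀ i, Tendsto (fun r : ℝ =>
    (1 / (((n : ℝ) - 1) * sphereVol n)) *
      ∫ x in Metric.sphere (0 : En n) r,
        (∑ j, (K x i j - trTensor g K x * g x i j) * (x j / r))
        ∂(μH[(n : ℝ) - 1])) atTop (𝓝 (P i))

open scoped Pointwise in
private lemma aux_sphere_eq_smul {r : ℝ} (hr : 0 < r) :
    Metric.sphere (0 : En n) r = r • Metric.sphere (0 : En n) 1 := by
  rw [smul_sphere' hr.ne', smul_zero, mul_one, Real.norm_of_nonneg hr.le]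

private lemma aux_abs_coord_le_norm (x : En n) (j : Fin n) : |x j| ≤ ‖x‖ := by
  rw [EuclideanSpace.norm_eq]
  calc |x j| = Real.sqrt (‖x j‖^2) := by rw [Real.sqrt_sq_eq_abs]; simp [Real.norm_eq_abs]
  _ ≤ _ := Real.sqrt_le_sqrt (Finset.single_le_sum (f := fun i => ‖x i‖^2)
      (fun i _ => sq_nonneg _) (Finset.mem_univ j))

private lemma aux_inv_entry_bound {N : ℕ} {A : Matrix (Fin N) (Fin N) ℝ} (hA : IsUnit A.det)
    (h : ∀ a b, |A a b - (if a = b then (1:ℝ) else 0)| ≤ 1 / (2 * N)) :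
    ∀ a b, |A⁻¹ a b| ≤ 2 := by
  intro a b
  have key : A⁻¹ = 1 + A⁻¹ * (1 - A) := by
    rw [Matrix.mul_sub, Matrix.mul_one, Matrix.nonsing_inv_mul A hA]; abel
  set S := ∑ k, |A⁻¹ a k| with hSdef
  have hS0 : 0 ≤ S := Finset.sum_nonneg fun _ _ => abs_nonneg _
  have hstep : S ≤ 1 + (N:ℝ) * (S * (1/(2*(N:ℝ)))) := by
    calc S = ∑ k, |(1 + A⁻¹*(1-A)) a k| := by rw [← key]
    _ ≤ ∑ k : Fin N, ((if a = k then (1:ℝ) else 0) + S * (1/(2*(N:ℝ)))) := by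
        refine Finset.sum_le_sum fun k _ => ?_
        rw [Matrix.add_apply, Matrix.mul_apply]
        refine (abs_add_le _ _).trans (add_le_add ?_ ?_)
        · rw [Matrix.one_apply]; split <;> simp
        · refine (Finset.abs_sum_le_sum_abs _ _).trans ?_
          rw [hSdef, Finset.sum_mul]
          refine Finset.sum_le_sum fun l _ => ?_
          rw [abs_mul]
          refine mul_le_mul_of_nonneg_left ?_ (abs_nonneg _)
          calc |(1 - A) l k| = |A l k - (if l = k then (1:ℝ) else 0)| := by
                rw [Matrix.sub_apply, Matrix.one_apply, abs_sub_comm]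
          _ ≤ 1/(2*(N:ℝ)) := h l k
    _ = 1 + (N:ℝ) * (S * (1/(2*(N:ℝ)))) := by
        rw [Finset.sum_add_distrib]
        simp [Finset.sum_const, Finset.card_univ, nsmul_eq_mul, mul_comm]
  have hN : 0 < (N:ℝ) := by exact_mod_cast a.pos
  have heq : (N:ℝ) * (S * (1/(2*(N:ℝ)))) = S/2 := by field_simp
  rw [heq] at hstep
  exact le_trans (Finset.single_le_sum (f := fun k => |A⁻¹ a k|)
    (fun _ _ => abs_nonneg _) (Finset.mem_univ b)) (by linarith)

private lemma aux_cont_inv {g : En n → Matrix (Fin n) (Fin n) ℝ}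
    (hg : ∀ i j, Continuous fun x => g x i j) (hpos : ∀ x, (g x).PosDef) (i j : Fin n) :
    Continuous fun x => (g x)⁻¹ i j := by
  have hgc : Continuous g := continuous_matrix hg
  have : (fun x => (g x)⁻¹ i j) = fun x => ((g x).det)⁻¹ * (g x).adjugate i j := by
    funext x
    rw [Matrix.inv_def, Ring.inverse_eq_inv', Matrix.smul_apply, smul_eq_mul]
  rw [this]
  exact (hgc.matrix_det.inv₀ fun x => (hpos x).det_pos.ne').mul
    (hgc.matrix_adjugate.matrix_elem i j)

private lemma momentum_key {τ : ℝ} {g K : En n → Matrix (Fin n) (Fin n) ℝ} {f : En n → ℝ}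
    (hAF : IsAFData n τ g K) (hf : AFDecay n τ g f) (c : ℝ) {P : Fin n → ℝ}
    (hP : HasADMMomentum n g K P) :
    HasADMMomentum n (fun x => Real.exp (2*c*f x) • g x)
      (fun x => Real.exp (c*f x) • K x) P := by
  obtain ⟨hgs, hKs, hpos, hKsymm, hτ, C, R, ε, hC, hR, hε, hbounds⟩ := hAF
  obtain ⟨hfs, C₂, R₂, hC₂, hR₂, hfb⟩ := hf
  intro i
  by_cases hν : (1 : ℝ) / (((n:ℝ)-1) * sphereVol n) = 0
  · have h0 := hP i
    simp only [hν, zero_mul] at h0 ⊢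
    have hP0 : P i = 0 := tendsto_nhds_unique h0 tendsto_const_nhds
    rw [hP0]; exact tendsto_const_nhds
  · -- nondegenerate case
    have hν' : (1:ℝ) / (((n:ℝ)-1) * sphereVol n) ≠ 0 := hν
    rw [div_ne_zero_iff] at hν'
    have hn1 : ((n:ℝ) - 1) ≠ 0 := (mul_ne_zero_iff.1 hν'.2).1
    have hsv : sphereVol n ≠ 0 := (mul_ne_zero_iff.1 hν'.2).2
    have hnpos : 0 < n := i.pos
    have hne1 : n ≠ 1 := fun h => hn1 (by simp [h])
    have hn2 : 2 ≤ n := by omega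
    have hn2R : (2:ℝ) ≤ (n:ℝ) := by exact_mod_cast hn2
    have hnR : (0:ℝ) < (n:ℝ) := by linarith
    have hτ2 : (1/2:ℝ) < τ := lt_of_le_of_lt (le_max_left _ _) hτ
    have hτ3 : (n:ℝ) - 3 < τ := lt_of_le_of_lt (le_max_right _ _) hτ
    have hτ0 : (0:ℝ) < τ := by linarith
    have hexpneg : (n:ℝ) - 2 - 2*τ < 0 := by
      rcases le_or_gt ((n:ℝ)) 3 with h | h
      · linarith
      · have h3n : 3 < n := by exact_mod_cast h
        have h4 : (4:ℝ) ≤ (n:ℝ) := by exact_mod_cast (by omega : 4 ≤ n)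
        linarith
    have hVtop : μH[(n:ℝ)-1] (Metric.sphere (0 : En n) 1) ≠ ⊤ := by
      intro h
      apply hsv
      unfold sphereVol
      rw [h, ENNReal.toReal_top]
    have hmeasval : ∀ {r : ℝ}, 0 < r → μH[(n:ℝ)-1] (Metric.sphere (0 : En n) r)
        = (‖r‖₊ ^ ((n:ℝ)-1)) • μH[(n:ℝ)-1] (Metric.sphere (0 : En n) 1) := by
      intro r hr
      rw [aux_sphere_eq_smul hr]
      exact MeasureTheory.Measure.hausdorffMeasure_smul₀ (by linarith : (0:ℝ) ≤ (n:ℝ)-1) hr.ne' _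
    have hmeastop : ∀ {r : ℝ}, 0 < r → μH[(n:ℝ)-1] (Metric.sphere (0 : En n) r) ≠ ⊤ := by
      intro r hr
      rw [hmeasval hr, ENNReal.smul_def, smul_eq_mul]
      exact ENNReal.mul_ne_top ENNReal.coe_ne_top hVtop
    have hmeasreal : ∀ {r : ℝ}, 0 < r → (μH[(n:ℝ)-1] (Metric.sphere (0 : En n) r)).toReal
        = r ^ ((n:ℝ)-1) * sphereVol n := by
      intro r hr
      rw [hmeasval hr, ENNReal.smul_def, smul_eq_mul, ENNReal.toReal_mul, ENNReal.coe_toReal,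
        NNReal.coe_rpow, coe_nnnorm, Real.norm_of_nonneg hr.le]
      rfl
    -- continuity facts
    have hgc : ∀ a b, Continuous fun x => g x a b := fun a b => (hgs a b).continuous
    have hKc : ∀ a b, Continuous fun x => K x a b := fun a b => (hKs a b).continuous
    have hinvc : ∀ a b, Continuous fun x => (g x)⁻¹ a b := aux_cont_inv hgc hpos
    have htrc : Continuous fun x => trTensor g K x := by
      unfold trTensor
      exact continuous_finset_sum _ fun a _ =>
        continuous_finset_sum _ fun b _ => (hinvc a b).mul (hKc a b)
    have hfc : Continuous f := hfs.continuous
    have hec : Continuous fun x => Real.exp (c * f x) :=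
      Real.continuous_exp.comp (continuous_const.mul hfc)
    have hcoord : ∀ j : Fin n, Continuous fun x : En n => x j := fun j => (continuous_apply j).comp (PiLp.continuous_ofLp 2 _)
    have hIc : ∀ r : ℝ, Continuous fun x : En n =>
        ∑ j, (K x i j - trTensor g K x * g x i j) * (x j / r) := fun r =>
      continuous_finset_sum _ fun j _ =>
        ((hKc i j).sub (htrc.mul (hgc i j))).mul ((hcoord j).div_const r)
    have hIntOn : ∀ (F : En n → ℝ), Continuous F → ∀ {r : ℝ}, 0 < r →
        IntegrableOn F (Metric.sphere (0 : En n) r) μH[(n:ℝ)-1] := by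
      intro F hF r hr
      obtain ⟨M, hM⟩ := (isCompact_sphere (0 : En n) r).exists_bound_of_continuousOn
        hF.continuousOn
      exact MeasureTheory.Measure.integrableOn_of_bounded (hmeastop hr) hF.aestronglyMeasurable
        ((ae_restrict_iff' Metric.isClosed_sphere.measurableSet).2 (ae_of_all _ hM))
    -- the algebraic identity
    have hdetU : ∀ x : En n, IsUnit (g x).det := fun x =>
      isUnit_iff_ne_zero.2 (hpos x).det_pos.ne'
    have htrbar : ∀ x : En n,
        trTensor (fun y => Real.exp (2*c*f y) • g y) (fun y => Real.exp (c*f y) • K y) x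
          = (Real.exp (c*f x))⁻¹ * trTensor g K x := by
      intro x
      have hsne : Real.exp (c*f x) ≠ 0 := (Real.exp_pos _).ne'
      have h2 : Real.exp (2*c*f x) = Real.exp (c*f x) * Real.exp (c*f x) := by
        rw [← Real.exp_add]; ring_nf
      have hinv : ((Real.exp (2*c*f x)) • g x)⁻¹
          = (Real.exp (c*f x) * Real.exp (c*f x))⁻¹ • (g x)⁻¹ := by
        rw [h2]
        refine Matrix.inv_eq_right_inv ?_
        rw [Matrix.smul_mul, Matrix.mul_smul, Matrix.mul_nonsing_inv _ (hdetU x), smul_smul,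
          mul_inv_cancel₀ (mul_ne_zero hsne hsne), one_smul]
      unfold trTensor
      simp only [hinv, Matrix.smul_apply, smul_eq_mul]
      rw [Finset.mul_sum]
      refine Finset.sum_congr rfl fun a _ => ?_
      rw [Finset.mul_sum]
      refine Finset.sum_congr rfl fun b _ => ?_
      field_simp
    have hident : ∀ (r : ℝ) (x : En n),
        (∑ j, ((Real.exp (c*f x) • K x) i j
          - trTensor (fun y => Real.exp (2*c*f y) • g y) (fun y => Real.exp (c*f y) • K y) x
            * ((Real.exp (2*c*f x)) • g x) i j) * (x j / r))
        = Real.exp (c*f x) * ∑ j, (K x i j - trTensor g K x * g x i j) * (x j / r) := by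
      intro r x
      rw [Finset.mul_sum]
      refine Finset.sum_congr rfl fun j _ => ?_
      rw [htrbar x]
      simp only [Matrix.smul_apply, smul_eq_mul]
      have h2 : Real.exp (2*c*f x) = Real.exp (c*f x) * Real.exp (c*f x) := by
        rw [← Real.exp_add]; ring_nf
      rw [h2]
      have hsne : Real.exp (c*f x) ≠ 0 := (Real.exp_pos _).ne'
      linear_combination (-(x j / r) * trTensor g K x * g x i j * Real.exp (c*f x))
        * (mul_inv_cancel₀ hsne)
    -- constants
    set Cb : ℝ := 2 * |c| * C₂ * ((n:ℝ) * (C * (1+4*(n:ℝ)^2))) with hCb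
    set Eb : ℝ := |1 / (((n:ℝ)-1) * sphereVol n)| * Cb * sphereVol n with hEb
    -- eventual smallness
    have Ev1 : ∀ᶠ r : ℝ in atTop, C * r^(-τ) ≤ 1/(2*(n:ℝ)) := by
      have ht : Tendsto (fun r:ℝ => C * r^(-τ)) atTop (𝓝 0) := by
        simpa using (tendsto_rpow_neg_atTop hτ0).const_mul C
      exact (ht.eventually_lt_const (div_pos one_pos (by linarith : (0:ℝ) < 2*(n:ℝ)))).mono
        fun r h => h.le
    have Ev2 : ∀ᶠ r : ℝ in atTop, |c| * (C₂ * r^(-τ)) ≤ 1 := by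
      have ht : Tendsto (fun r:ℝ => |c| * (C₂ * r^(-τ))) atTop (𝓝 0) := by
        have := (tendsto_rpow_neg_atTop hτ0).const_mul (|c| * C₂)
        simpa [mul_assoc] using this
      exact (ht.eventually_lt_const one_pos).mono fun r h => h.le
    -- the main bound
    have hbnd : ∀ᶠ r : ℝ in atTop,
        ‖(1 / (((n:ℝ)-1) * sphereVol n)) * ∫ x in Metric.sphere (0:En n) r,
          (Real.exp (c*f x) - 1) * (∑ j, (K x i j - trTensor g K x * g x i j) * (x j / r))
            ∂μH[(n:ℝ)-1]‖ ≤ Eb * r ^ ((n:ℝ)-2-2*τ) := by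
      filter_upwards [Ev1, Ev2, eventually_ge_atTop (max 1 (max R R₂))] with r h1 h2 h3
      have hr1 : (1:ℝ) ≤ r := le_trans (le_max_left _ _) h3
      have hr0 : (0:ℝ) < r := lt_of_lt_of_le one_pos hr1
      have hrR : R ≤ r := le_trans (le_trans (le_max_left R R₂) (le_max_right 1 _)) h3
      have hrR₂ : R₂ ≤ r := le_trans (le_trans (le_max_right R R₂) (le_max_right 1 _)) h3
      have hptb : ∀ x ∈ Metric.sphere (0:En n) r,
          ‖(Real.exp (c*f x) - 1) * (∑ j, (K x i j - trTensor g K x * g x i j) * (x j / r))‖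
            ≤ Cb * (r^(-τ) * (r^(-τ)/r)) := by
        intro x hx
        have hxr : ‖x‖ = r := mem_sphere_zero_iff_norm.1 hx
        have hxR : R ≤ ‖x‖ := by rw [hxr]; exact hrR
        have hxR₂ : R₂ ≤ ‖x‖ := by rw [hxr]; exact hrR₂
        have hgKb := (hbounds x hxR).1
        rw [hxr] at hgKb
        have hgdb : ∀ a b, |g x a b - (if a = b then (1:ℝ) else 0)| ≤ C * r^(-τ) := by
          intro a b
          have h := hgKb a b a
          have n1 : 0 ≤ r * |pd a (fun y => g y a b) x| := by positivity
          have n2 : 0 ≤ r * |K x a b| := by positivity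
          linarith
        have hKb : ∀ a b, |K x a b| ≤ C * r^(-τ)/r := by
          intro a b
          have h := hgKb a b a
          have n1 : 0 ≤ |g x a b - (if a = b then (1:ℝ) else 0)| := abs_nonneg _
          have n2 : 0 ≤ r * |pd a (fun y => g y a b) x| := by positivity
          rw [le_div_iff₀ hr0, mul_comm]
          linarith
        have hinvb : ∀ a b, |(g x)⁻¹ a b| ≤ 2 :=
          aux_inv_entry_bound (hdetU x) (fun a b => le_trans (hgdb a b) h1)
        have hone_le : (1:ℝ)/(2*(n:ℝ)) ≤ 1 := by
          rw [div_le_one (by linarith : (0:ℝ) < 2*(n:ℝ))]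
          linarith
        have hgab : ∀ a b, |g x a b| ≤ 2 := by
          intro a b
          have h := hgdb a b
          have habs : |g x a b| ≤ |g x a b - (if a = b then (1:ℝ) else 0)|
              + |if a = b then (1:ℝ) else 0| := by
            calc |g x a b| = |(g x a b - (if a = b then (1:ℝ) else 0))
                + (if a = b then (1:ℝ) else 0)| := by rw [sub_add_cancel]
            _ ≤ _ := abs_add_le _ _
          have hδ : |if a = b then (1:ℝ) else 0| ≤ 1 := by split_ifs <;> simp
          linarith [le_trans h h1]
        have htrb : |trTensor g K x| ≤ (n:ℝ)^2 * (2 * (C * r^(-τ)/r)) := by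
          unfold trTensor
          refine le_trans (Finset.abs_sum_le_sum_abs _ _) ?_
          have hrow : ∀ a : Fin n, ∑ b, |(g x)⁻¹ a b * K x a b|
              ≤ (n:ℝ) * (2 * (C * r^(-τ)/r)) := by
            intro a
            calc ∑ b, |(g x)⁻¹ a b * K x a b| ≤ ∑ _b : Fin n, 2 * (C * r^(-τ)/r) :=
                Finset.sum_le_sum fun b _ => by
                  rw [abs_mul]
                  exact mul_le_mul (hinvb a b) (hKb a b) (abs_nonneg _) (by norm_num)
            _ = (n:ℝ) * (2 * (C * r^(-τ)/r)) := by
                rw [Finset.sum_const, Finset.card_univ, Fintype.card_fin, nsmul_eq_mul]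
          refine le_trans (Finset.sum_le_sum fun a _ =>
            le_trans (Finset.abs_sum_le_sum_abs _ _) (hrow a)) ?_
          rw [Finset.sum_const, Finset.card_univ, Fintype.card_fin, nsmul_eq_mul]
          exact le_of_eq (by ring)
        have hxj : ∀ j : Fin n, |x j / r| ≤ 1 := by
          intro j
          rw [abs_div, abs_of_pos hr0, div_le_one hr0]
          exact le_trans (aux_abs_coord_le_norm x j) (le_of_eq hxr)
        have hIb : |∑ j, (K x i j - trTensor g K x * g x i j) * (x j / r)|
            ≤ (n:ℝ) * (C * r^(-τ)/r + (n:ℝ)^2 * (2 * (C * r^(-τ)/r)) * 2) := by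
          refine le_trans (Finset.abs_sum_le_sum_abs _ _) ?_
          calc ∑ j, |(K x i j - trTensor g K x * g x i j) * (x j / r)|
              ≤ ∑ _j : Fin n, (C * r^(-τ)/r + (n:ℝ)^2 * (2 * (C * r^(-τ)/r)) * 2) :=
              Finset.sum_le_sum fun j _ => by
                rw [abs_mul]
                refine le_trans (mul_le_of_le_one_right (abs_nonneg _) (hxj j)) ?_
                refine le_trans (abs_sub _ _) (add_le_add (hKb i j) ?_)
                rw [abs_mul]
                exact mul_le_mul htrb (hgab i j) (abs_nonneg _) (by positivity)
          _ = (n:ℝ) * (C * r^(-τ)/r + (n:ℝ)^2 * (2 * (C * r^(-τ)/r)) * 2) := by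
              rw [Finset.sum_const, Finset.card_univ, Fintype.card_fin, nsmul_eq_mul]
        have hfx : |f x| ≤ C₂ * r^(-τ) := by
          have h := hfb x hxR₂
          rw [hxr] at h
          have n1 : 0 ≤ r * Real.sqrt (gradSq g f x) := by positivity
          have n2 : 0 ≤ r * Real.sqrt |laplacian g f x| := by positivity
          linarith
        have hcf : |c * f x| ≤ 1 := by
          rw [abs_mul]
          calc |c| * |f x| ≤ |c| * (C₂ * r^(-τ)) :=
            mul_le_mul_of_nonneg_left hfx (abs_nonneg _)
          _ ≤ 1 := h2
        have hediff : |Real.exp (c*f x) - 1| ≤ 2 * (|c| * (C₂ * r^(-τ))) := by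
          calc |Real.exp (c*f x) - 1| ≤ 2 * |c * f x| := Real.abs_exp_sub_one_le hcf
          _ = 2 * (|c| * |f x|) := by rw [abs_mul]
          _ ≤ _ := by
              have := mul_le_mul_of_nonneg_left hfx (abs_nonneg c)
              linarith
        rw [Real.norm_eq_abs, abs_mul]
        calc |Real.exp (c*f x) - 1| * |∑ j, (K x i j - trTensor g K x * g x i j) * (x j / r)|
            ≤ (2 * (|c| * (C₂ * r^(-τ))))
              * ((n:ℝ) * (C * r^(-τ)/r + (n:ℝ)^2 * (2 * (C * r^(-τ)/r)) * 2)) :=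
              mul_le_mul hediff hIb (abs_nonneg _) (by positivity)
        _ = Cb * (r^(-τ) * (r^(-τ)/r)) := by rw [hCb]; ring
      have hintb := norm_setIntegral_le_of_norm_le_const (μ := μH[(n:ℝ)-1])
        (lt_top_iff_ne_top.2 (hmeastop hr0)) hptb
      rw [norm_mul]
      calc ‖(1:ℝ) / (((n:ℝ)-1) * sphereVol n)‖
            * ‖∫ x in Metric.sphere (0:En n) r,
                (Real.exp (c*f x) - 1) * (∑ j, (K x i j - trTensor g K x * g x i j) * (x j / r))
                  ∂μH[(n:ℝ)-1]‖
          ≤ ‖(1:ℝ) / (((n:ℝ)-1) * sphereVol n)‖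
            * (Cb * (r^(-τ) * (r^(-τ)/r)) * (μH[(n:ℝ)-1] (Metric.sphere (0:En n) r)).toReal) :=
            mul_le_mul_of_nonneg_left hintb (norm_nonneg _)
      _ = Eb * r ^ ((n:ℝ)-2-2*τ) := by
          rw [hmeasreal hr0, hEb, Real.norm_eq_abs]
          have hpow : r^(-τ) * (r^(-τ)/r) * r^((n:ℝ)-1) = r^((n:ℝ)-2-2*τ) := by
            rw [div_eq_mul_inv, ← Real.rpow_neg_one r, ← Real.rpow_add hr0, ← Real.rpow_add hr0,
              ← Real.rpow_add hr0]
            congr 1; ring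
          calc |1 / (((n:ℝ)-1) * sphereVol n)|
              * (Cb * (r^(-τ) * (r^(-τ)/r)) * (r^((n:ℝ)-1) * sphereVol n))
              = (|1 / (((n:ℝ)-1) * sphereVol n)| * Cb * sphereVol n)
                * (r^(-τ) * (r^(-τ)/r) * r^((n:ℝ)-1)) := by ring
          _ = _ := by rw [hpow]
    have htend : Tendsto (fun r:ℝ => Eb * r ^ ((n:ℝ)-2-2*τ)) atTop (𝓝 0) := by
      have h0 : Tendsto (fun r:ℝ => r ^ ((n:ℝ)-2-2*τ)) atTop (𝓝 (0:ℝ)) := by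
        have := tendsto_rpow_neg_atTop (show (0:ℝ) < -((n:ℝ)-2-2*τ) by linarith)
        simpa [neg_neg] using this
      simpa using h0.const_mul Eb
    have hDto : Tendsto (fun r : ℝ => (1 / (((n:ℝ)-1) * sphereVol n))
        * ∫ x in Metric.sphere (0:En n) r,
          (Real.exp (c*f x) - 1) * (∑ j, (K x i j - trTensor g K x * g x i j) * (x j / r))
            ∂μH[(n:ℝ)-1]) atTop (𝓝 0) :=
      squeeze_zero_norm' hbnd htend
    have hmain : Tendsto (fun r : ℝ => (1 / (((n:ℝ)-1) * sphereVol n))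
        * ∫ x in Metric.sphere (0:En n) r,
          Real.exp (c*f x) * (∑ j, (K x i j - trTensor g K x * g x i j) * (x j / r))
            ∂μH[(n:ℝ)-1]) atTop (𝓝 (P i)) := by
      have hadd := (hP i).add hDto
      rw [add_zero] at hadd
      refine hadd.congr' ?_
      filter_upwards [eventually_gt_atTop 0] with r hr
      have hI1 := hIntOn (fun x => ∑ j, (K x i j - trTensor g K x * g x i j) * (x j / r))
        (hIc r) hr
      have hI2 := hIntOn
        (fun x => (Real.exp (c * f x) - 1) * ∑ j, (K x i j - trTensor g K x * g x i j) * (x j / r))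
        ((hec.sub continuous_const).mul (hIc r)) hr
      rw [← mul_add, ← integral_add hI1 hI2]
      congr 1
      refine integral_congr_ae (ae_of_all _ fun x => ?_)
      show (∑ j, (K x i j - trTensor g K x * g x i j) * (x j / r))
          + (Real.exp (c*f x) - 1) * (∑ j, (K x i j - trTensor g K x * g x i j) * (x j / r))
        = Real.exp (c*f x) * (∑ j, (K x i j - trTensor g K x * g x i j) * (x j / r))
      ring
    refine Tendsto.congr (fun r => ?_) hmain
    congr 1
    refine integral_congr_ae (ae_of_all _ fun x => ?_)
    exact (hident r x).symm

/-- under the decay hypotheses on `f`, the ADM momenta of `(g,K)`,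
`(ḡ,K̄) = (e^{2βf}g, e^{βf}K)` and `(g̃,K̃) = (e^{2f}g, e^{f}K)` all coincide:
`P̄ = P̃ = P`. -/
theorem ADMMomentum_invariant (n : ℕ) (τ : ℝ) (g K : En n → Matrix (Fin n) (Fin n) ℝ)
    (f : En n → ℝ) (hAF : IsAFData n τ g K) (hf : AFDecay n τ g f)
    (β : ℝ) (hβ : 0 < β) (hβ1 : β < 1)
    (P : Fin n → ℝ) (hP : HasADMMomentum n g K P) :
    HasADMMomentum n (fun x => Real.exp (2 * β * f x) • g x)
        (fun x => Real.exp (β * f x) • K x) P ∧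
    HasADMMomentum n (fun x => Real.exp (2 * f x) • g x)
        (fun x => Real.exp (f x) • K x) P := by
  constructor
  · exact momentum_key hAF hf β hP
  · have h := momentum_key hAF hf 1 hP
    simpa only [one_mul, mul_one] using h
end
end

section
/- Let g be a Riemannian metric, f smooth, 0 < β ≤ 1, ḡ = e^{2βf}g, g̃ = e^{2f}g. If e^{−2βf}((1−β)S + β e^{2f}S̃) ≥ −n(n−1) pointwise, then S̄ ≥ −n(n−1) pointwise, with equality at a point only if ∇f vanishes there (when 0 < β < 1 and n ≥ 3). -/
open scoped BigOperators
open MeasureTheory Filter Topology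

noncomputable section

variable {n : ℕ}

lemma pd_congr {a b : En n → ℝ} (i : Fin n) (x : En n) (h : ∀ y, a y = b y) :
    pd i a x = pd i b x := by
  have : a = b := funext h
  rw [this]

lemma pd_add {a b : En n → ℝ} {x : En n} (i : Fin n) (ha : DifferentiableAt ℝ a x)
    (hb : DifferentiableAt ℝ b x) :
    pd i (fun y => a y + b y) x = pd i a x + pd i b x := by
  simp [pd, fderiv_fun_add ha hb]

lemma pd_const (i : Fin n) (x : En n) (c : ℝ) : pd i (fun _ => c) x = 0 := by
  simp [pd]

lemma pd_const_mul {a : En n → ℝ} {x : En n} (i : Fin n) (c : ℝ)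
    (ha : DifferentiableAt ℝ a x) :
    pd i (fun y => c * a y) x = c * pd i a x := by
  simp [pd, fderiv_const_mul ha]

lemma pd_mul {a b : En n → ℝ} {x : En n} (i : Fin n) (ha : DifferentiableAt ℝ a x)
    (hb : DifferentiableAt ℝ b x) :
    pd i (fun y => a y * b y) x = pd i a x * b x + a x * pd i b x := by
  simp only [pd, fderiv_fun_mul ha hb]
  simp [mul_comm]
  ring

lemma pd_exp {a : En n → ℝ} {x : En n} (i : Fin n) (ha : DifferentiableAt ℝ a x) :
    pd i (fun y => Real.exp (a y)) x = Real.exp (a x) * pd i a x := by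
  simp [pd, fderiv_exp ha]

lemma pd_sum {ι : Type*} {s : Finset ι} {F : ι → En n → ℝ} {x : En n} (i : Fin n)
    (h : ∀ k ∈ s, DifferentiableAt ℝ (F k) x) :
    pd i (fun y => ∑ k ∈ s, F k y) x = ∑ k ∈ s, pd i (F k) x := by
  simp [pd, fderiv_fun_sum h]

lemma contDiff_pd {f : En n → ℝ} (i : Fin n) (hf : ContDiff ℝ (⊤ : ℕ∞) f) :
    ContDiff ℝ (⊤ : ℕ∞) (pd i f) :=
  (hf.fderiv_right (by simp)).clm_apply contDiff_const

lemma contDiff_det {M : En n → Matrix (Fin n) (Fin n) ℝ}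
    (h : ∀ i j, ContDiff ℝ (⊤ : ℕ∞) fun x => M x i j) :
    ContDiff ℝ (⊤ : ℕ∞) fun x => (M x).det := by
  simp only [Matrix.det_apply']
  exact ContDiff.sum fun σ _ => contDiff_const.mul (contDiff_prod fun i _ => h _ _)

lemma contDiff_inv_entry {g : En n → Matrix (Fin n) (Fin n) ℝ}
    (hg : ∀ i j, ContDiff ℝ (⊤ : ℕ∞) fun x => g x i j) (hdet : ∀ x, (g x).det ≠ 0)
    (i j : Fin n) : ContDiff ℝ (⊤ : ℕ∞) fun x => (g x)⁻¹ i j := by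
  have hadj : ContDiff ℝ (⊤ : ℕ∞) fun x => (g x).adjugate i j := by
    simp only [Matrix.adjugate_apply]
    refine contDiff_det fun a b => ?_
    simp only [Matrix.updateRow_apply]
    by_cases hab : a = j <;> simp [hab, hg a b, contDiff_const]
  have : (fun x => (g x)⁻¹ i j) = fun x => ((g x).det)⁻¹ * (g x).adjugate i j := by
    funext x
    rw [Matrix.inv_def, Matrix.smul_apply, Ring.inverse_eq_inv, smul_eq_mul]
  rw [this]
  exact ((contDiff_det hg).inv hdet).mul hadj


/-- the first-order coefficient tensor `A^k_{ij}`. -/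
def pA (g : En n → Matrix (Fin n) (Fin n) ℝ) (f : En n → ℝ) (k i j : Fin n) (x : En n) : ℝ :=
  ∑ l, (g x)⁻¹ k l * (pd i f x * g x j l + pd j f x * g x i l - pd l f x * g x i j)

section Smooth
variable {g : En n → Matrix (Fin n) (Fin n) ℝ} {f : En n → ℝ}

lemma det_ne (hgpos : ∀ x, (g x).PosDef) : ∀ x, (g x).det ≠ 0 :=
  fun x => ((hgpos x).det_pos).ne'

lemma contDiff_ginv (hg : SmoothMetric g) (hgpos : ∀ x, (g x).PosDef) (i j : Fin n) :
    ContDiff ℝ (⊤ : ℕ∞) fun x => (g x)⁻¹ i j :=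
  contDiff_inv_entry hg (det_ne hgpos) i j

lemma contDiff_christoffel (hg : SmoothMetric g) (hgpos : ∀ x, (g x).PosDef) (k i j : Fin n) :
    ContDiff ℝ (⊤ : ℕ∞) (christoffel g k i j) := by
  unfold christoffel
  refine contDiff_const.mul (ContDiff.sum fun l _ => (contDiff_ginv hg hgpos k l).mul ?_)
  exact ((contDiff_pd i (hg j l)).add (contDiff_pd j (hg i l))).sub (contDiff_pd l (hg i j))

lemma contDiff_pA (hg : SmoothMetric g) (hgpos : ∀ x, (g x).PosDef) (hf : ContDiff ℝ (⊤ : ℕ∞) f)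
    (k i j : Fin n) : ContDiff ℝ (⊤ : ℕ∞) (pA g f k i j) := by
  unfold pA
  refine ContDiff.sum fun l _ => (contDiff_ginv hg hgpos k l).mul ?_
  exact (((contDiff_pd i hf).mul (hg j l)).add ((contDiff_pd j hf).mul (hg i l))).sub
    ((contDiff_pd l hf).mul (hg i j))

lemma conf_inv (hgpos : ∀ x, (g x).PosDef) (c : ℝ) (x : En n) :
    (Real.exp (2*c*f x) • g x)⁻¹ = Real.exp (-(2*c*f x)) • (g x)⁻¹ := by
  apply Matrix.inv_eq_right_inv
  rw [Matrix.smul_mul, Matrix.mul_smul, smul_smul,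
    Matrix.mul_nonsing_inv _ ((hgpos x).det_pos.ne'.isUnit)]
  rw [← Real.exp_add]
  simp

end Smooth

section Conf
variable {g : En n → Matrix (Fin n) (Fin n) ℝ} {f : En n → ℝ}
variable (hg : SmoothMetric g) (hgpos : ∀ x, (g x).PosDef) (hf : ContDiff ℝ (⊤ : ℕ∞) f)
include hg hgpos hf

lemma pd_conf_entry (c : ℝ) (a b m : Fin n) (x : En n) :
    pd m (fun y => (Real.exp (2*c*f y) • g y) a b) x
      = Real.exp (2*c*f x) * (2*c*pd m f x * g x a b + pd m (fun y => g y a b) x) := by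
  have h1 : ∀ y, (Real.exp (2*c*f y) • g y) a b = Real.exp (2*c*f y) * g y a b := by
    intro y; simp [Matrix.smul_apply]
  rw [pd_congr m x h1]
  have hd1 : DifferentiableAt ℝ (fun y => Real.exp (2*c*f y)) x := by
    exact (Real.differentiable_exp.comp ((hf.differentiable (by simp)).const_mul (2*c))).differentiableAt
  have hd2 : DifferentiableAt ℝ (fun y => g y a b) x :=
    ((hg a b).differentiable (by simp)).differentiableAt
  rw [pd_mul m hd1 hd2, pd_exp m (((hf.differentiable (by simp)).const_mul (2*c)).differentiableAt),
    pd_const_mul m (2*c) (hf.differentiable (by simp)).differentiableAt]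
  ring

lemma christoffel_conf (c : ℝ) (k i j : Fin n) (x : En n) :
    christoffel (fun y => Real.exp (2*c*f y) • g y) k i j x
      = christoffel g k i j x + c * pA g f k i j x := by
  unfold christoffel pA
  rw [conf_inv hgpos c x, Finset.mul_sum, Finset.mul_sum, Finset.mul_sum,
    ← Finset.sum_add_distrib]
  refine Finset.sum_congr rfl fun l _ => ?_
  rw [pd_conf_entry hg hgpos hf c j l i x, pd_conf_entry hg hgpos hf c i l j x,
    pd_conf_entry hg hgpos hf c i j l x, Matrix.smul_apply, Real.exp_neg]
  have hE := Real.exp_ne_zero (2*c*f x)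
  field_simp
  have hE' : Real.exp (2*c*f x) * (Real.exp (2*c*f x))⁻¹ = 1 := mul_inv_cancel₀ (Real.exp_ne_zero _)
  linear_combination ((g x)⁻¹ k l * (c * pd i f x * g x j l * 2 + c * pd j f x * g x i l * 2 - c * pd l f x * g x i j * 2 + pd i (fun y => g y j l) x + pd j (fun y => g y i l) x - pd l (fun y => g y i j) x)) * hE'

end Conf

def cB (g : En n → Matrix (Fin n) (Fin n) ℝ) (f : En n → ℝ) (i j : Fin n) (x : En n) : ℝ :=
  ((∑ k, pd k (pA g f k i j) x) - (∑ k, pd j (pA g f k i k) x))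
  + (∑ k, ∑ l, (christoffel g k k l x * pA g f l i j x + pA g f k k l x * christoffel g l i j x))
  - (∑ k, ∑ l, (christoffel g k j l x * pA g f l i k x + pA g f k j l x * christoffel g l i k x))

def cC (g : En n → Matrix (Fin n) (Fin n) ℝ) (f : En n → ℝ) (i j : Fin n) (x : En n) : ℝ :=
  (∑ k, ∑ l, pA g f k k l x * pA g f l i j x) - (∑ k, ∑ l, pA g f k j l x * pA g f l i k x)

def LL (g : En n → Matrix (Fin n) (Fin n) ℝ) (f : En n → ℝ) (x : En n) : ℝ :=
  ∑ i, ∑ j, (g x)⁻¹ i j * cB g f i j x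

def QQ (g : En n → Matrix (Fin n) (Fin n) ℝ) (f : En n → ℝ) (x : En n) : ℝ :=
  ∑ i, ∑ j, (g x)⁻¹ i j * cC g f i j x

section Conf2
variable {g : En n → Matrix (Fin n) (Fin n) ℝ} {f : En n → ℝ}
variable (hg : SmoothMetric g) (hgpos : ∀ x, (g x).PosDef) (hf : ContDiff ℝ (⊤ : ℕ∞) f)
include hg hgpos hf

lemma ricci_conf (c : ℝ) (i j : Fin n) (x : En n) :
    ricci (fun y => Real.exp (2*c*f y) • g y) i j x
      = ricci g i j x + c * cB g f i j x + c^2 * cC g f i j x := by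
  have hpd : ∀ (m k a b : Fin n),
      pd m (christoffel (fun y => Real.exp (2*c*f y) • g y) k a b) x
        = pd m (christoffel g k a b) x + c * pd m (pA g f k a b) x := by
    intro m k a b
    rw [pd_congr m x (fun y => christoffel_conf hg hgpos hf c k a b y)]
    rw [pd_add m (((contDiff_christoffel hg hgpos k a b).differentiable (by simp)).differentiableAt)
      (((contDiff_const.mul (contDiff_pA hg hgpos hf k a b)).differentiable (by simp)).differentiableAt),
      pd_const_mul m c (((contDiff_pA hg hgpos hf k a b).differentiable (by simp)).differentiableAt)]
  have hquad : ∀ (k a b k' a' b' : Fin n),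
      christoffel (fun y => Real.exp (2*c*f y) • g y) k a b x *
        christoffel (fun y => Real.exp (2*c*f y) • g y) k' a' b' x
      = christoffel g k a b x * christoffel g k' a' b' x
        + c * (christoffel g k a b x * pA g f k' a' b' x
               + pA g f k a b x * christoffel g k' a' b' x)
        + c^2 * (pA g f k a b x * pA g f k' a' b' x) := by
    intro k a b k' a' b'
    rw [christoffel_conf hg hgpos hf, christoffel_conf hg hgpos hf]
    ring
  unfold ricci cB cC
  simp only [hpd, hquad, Finset.sum_add_distrib, ← Finset.mul_sum]
  ring

lemma scalar_conf (c : ℝ) (x : En n) :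
    scalarCurv (fun y => Real.exp (2*c*f y) • g y) x
      = Real.exp (-(2*c*f x)) *
          (scalarCurv g x + c * LL g f x + c^2 * QQ g f x) := by
  unfold scalarCurv LL QQ
  rw [conf_inv hgpos c x]
  simp only [ricci_conf hg hgpos hf c, Matrix.smul_apply, smul_eq_mul,
    Finset.mul_sum, Finset.sum_add_distrib]
  ring_nf
  simp only [Finset.mul_sum, Finset.sum_add_distrib]
  ring

end Conf2

def tV (g : En n → Matrix (Fin n) (Fin n) ℝ) (f : En n → ℝ) (k : Fin n) (x : En n) : ℝ :=
  ∑ l, (g x)⁻¹ k l * pd l f x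

section Alg
variable {g : En n → Matrix (Fin n) (Fin n) ℝ} {f : En n → ℝ} {x : En n}
variable (hgpos : ∀ x, (g x).PosDef)
include hgpos

lemma gsym (a b : Fin n) : g x a b = g x b a := by
  have h : g x b a = g x a b := by simpa using (hgpos x).isHermitian.apply a b
  exact h.symm

lemma ginvsym (a b : Fin n) : (g x)⁻¹ a b = (g x)⁻¹ b a := by
  have h : (g x)⁻¹ b a = (g x)⁻¹ a b := by simpa using ((hgpos x).isHermitian.inv).apply a b
  exact h.symm

lemma hinvmul (k j : Fin n) : ∑ l, (g x)⁻¹ k l * g x l j = if k = j then 1 else 0 := by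
  have h := Matrix.nonsing_inv_mul (g x) (hgpos x).det_pos.ne'.isUnit
  have := congrFun (congrFun h k) j
  rw [Matrix.mul_apply] at this
  rw [this, Matrix.one_apply]

lemma hinvmul' (k j : Fin n) : ∑ l, (g x)⁻¹ k l * g x j l = if k = j then 1 else 0 := by
  rw [← hinvmul hgpos k j]
  exact Finset.sum_congr rfl fun l _ => by rw [gsym hgpos j l]

lemma hmulinv (i l : Fin n) : ∑ k, g x i k * (g x)⁻¹ k l = if i = l then 1 else 0 := by
  have h := Matrix.mul_nonsing_inv (g x) (hgpos x).det_pos.ne'.isUnit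
  have h2 := congrFun (congrFun h i) l
  rw [Matrix.mul_apply] at h2
  rw [h2, Matrix.one_apply]

lemma hgt (i : Fin n) : ∑ k, g x i k * tV g f k x = pd i f x := by
  unfold tV
  simp only [Finset.mul_sum]
  rw [Finset.sum_comm]
  have h0 : ∀ l, ∑ k, g x i k * ((g x)⁻¹ k l * pd l f x)
      = (∑ k, g x i k * (g x)⁻¹ k l) * pd l f x := by
    intro l
    rw [Finset.sum_mul]
    exact Finset.sum_congr rfl fun k _ => by ring
  simp only [h0, hmulinv hgpos, ite_mul, one_mul, zero_mul, Finset.sum_ite_eq,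
    Finset.mem_univ, if_true]

lemma hpt : ∑ l, pd l f x * tV g f l x = gradSq g f x := by
  unfold tV gradSq
  rw [Finset.sum_congr rfl fun l _ => Finset.mul_sum _ _ _]
  exact Finset.sum_congr rfl fun l _ => Finset.sum_congr rfl fun m _ => by ring

lemma pA_delta (k i j : Fin n) :
    pA g f k i j x = (if k = i then pd j f x else 0) + (if k = j then pd i f x else 0)
      - g x i j * tV g f k x := by
  unfold pA tV
  have : ∀ l, (g x)⁻¹ k l * (pd i f x * g x j l + pd j f x * g x i l - pd l f x * g x i j)
      = pd i f x * ((g x)⁻¹ k l * g x j l) + pd j f x * ((g x)⁻¹ k l * g x i l)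
        - g x i j * ((g x)⁻¹ k l * pd l f x) := by intro l; ring
  simp only [this, Finset.sum_add_distrib, Finset.sum_sub_distrib, ← Finset.mul_sum,
    hinvmul' hgpos]
  simp only [mul_ite, mul_one, mul_zero]
  by_cases h1 : k = i <;> by_cases h2 : k = j <;> simp [h1, h2] <;> ring

lemma sum_pA_diag (l : Fin n) : ∑ k, pA g f k k l x = n * pd l f x := by
  simp only [pA_delta hgpos, eq_self_iff_true, if_true]
  have e1 : (∑ k : Fin n, (pd l f x + if k = l then pd k f x else 0))
      = n * pd l f x + pd l f x := by
    simp [Finset.sum_add_distrib, Finset.sum_ite_eq', mul_comm]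
  have e3 : ∑ k, g x k l * tV g f k x = pd l f x := by
    rw [← hgt hgpos (f := f) l]
    exact Finset.sum_congr rfl fun k _ => by rw [gsym hgpos k l]
  rw [Finset.sum_sub_distrib, e1, e3]
  ring

end Alg

section Alg2
variable {g : En n → Matrix (Fin n) (Fin n) ℝ} {f : En n → ℝ} {x : En n}
variable (hgpos : ∀ x, (g x).PosDef)
include hgpos

lemma hlp (i j : Fin n) : ∑ l, pd l f x * pA g f l i j x
    = 2 * pd i f x * pd j f x - g x i j * gradSq g f x := by
  have expand : ∀ l, pd l f x * pA g f l i j x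
      = (if l = i then pd l f x * pd j f x else 0) + (if l = j then pd l f x * pd i f x else 0)
        - g x i j * (pd l f x * tV g f l x) := by
    intro l
    rw [pA_delta hgpos]
    by_cases h1 : l = i <;> by_cases h2 : l = j <;> simp [h1, h2] <;>
      (try split_ifs) <;> ring
  simp only [expand, Finset.sum_sub_distrib, Finset.sum_add_distrib, ← Finset.mul_sum,
    Finset.sum_ite_eq', Finset.mem_univ, if_true, hpt hgpos]
  ring

lemma htr : ∑ i, ∑ j, (g x)⁻¹ i j * g x i j = n := by
  have h0 : ∀ i : Fin n, ∑ j, (g x)⁻¹ i j * g x i j = 1 := by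
    intro i
    have := hinvmul' (x := x) (g := g) hgpos i i
    simpa using this
  simp [h0]

lemma hinner1 (i j : Fin n) : (∑ k, ∑ l, pA g f k k l x * pA g f l i j x)
    = n * (2 * pd i f x * pd j f x - g x i j * gradSq g f x) := by
  rw [Finset.sum_comm]
  have h0 : ∀ l, ∑ k, pA g f k k l x * pA g f l i j x
      = (n * pd l f x) * pA g f l i j x := by
    intro l
    rw [← Finset.sum_mul, sum_pA_diag hgpos]
  simp only [h0]
  have h1 : ∑ l, (n * pd l f x) * pA g f l i j x
      = n * ∑ l, pd l f x * pA g f l i j x := by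
    rw [Finset.mul_sum]
    exact Finset.sum_congr rfl fun l _ => by ring
  rw [h1, hlp hgpos]

lemma hinner9 (i j : Fin n) : (∑ k, ∑ l, pA g f k j l x * pA g f l i k x)
    = (n + 2) * (pd i f x * pd j f x) - 2 * g x i j * gradSq g f x := by
  classical
  have expand : ∀ k l : Fin n, pA g f k j l x * pA g f l i k x =
      (if k = j then pd l f x else 0) * (if l = i then pd k f x else 0)
      + (if k = j then pd l f x else 0) * (if l = k then pd i f x else 0)
      - (if k = j then pd l f x else 0) * (g x i k * tV g f l x)
      + (if k = l then pd j f x else 0) * (if l = i then pd k f x else 0)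
      + (if k = l then pd j f x else 0) * (if l = k then pd i f x else 0)
      - (if k = l then pd j f x else 0) * (g x i k * tV g f l x)
      - (g x j l * tV g f k x) * (if l = i then pd k f x else 0)
      - (g x j l * tV g f k x) * (if l = k then pd i f x else 0)
      + (g x j l * tV g f k x) * (g x i k * tV g f l x) := by
    intro k l
    rw [pA_delta hgpos, pA_delta hgpos]
    ring
  have Had : (∑ k, ∑ l, (if k = j then pd l f x else 0) * (if l = i then pd k f x else 0))
      = pd i f x * pd j f x := by
    simp [ite_mul, mul_ite, Finset.sum_ite_eq', mul_comm]
  have Hae : (∑ k, ∑ l, (if k = j then pd l f x else 0) * (if l = k then pd i f x else 0))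
      = pd i f x * pd j f x := by
    simp [ite_mul, mul_ite, Finset.sum_ite_eq', mul_comm]
  have Haf : (∑ k, ∑ l, (if k = j then pd l f x else 0) * (g x i k * tV g f l x))
      = g x i j * gradSq g f x := by
    have h1 : ∀ k, (∑ l, (if k = j then pd l f x else 0) * (g x i k * tV g f l x))
        = if k = j then g x i k * ∑ l, pd l f x * tV g f l x else 0 := by
      intro k
      by_cases h : k = j
      · simp only [h, if_true, Finset.mul_sum]
        exact Finset.sum_congr rfl fun l _ => by ring
      · simp [h]
    simp only [h1, Finset.sum_ite_eq', Finset.mem_univ, if_true, hpt hgpos]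
  have Hbd : (∑ k, ∑ l, (if k = l then pd j f x else 0) * (if l = i then pd k f x else 0))
      = pd i f x * pd j f x := by
    have h1 : ∀ k : Fin n, (∑ l, (if k = l then pd j f x else 0) * (if l = i then pd k f x else 0))
        = (if k = i then pd j f x * pd k f x else 0) := by
      intro k
      rw [Finset.sum_eq_single i]
      · by_cases h : k = i <;> simp [h]
      · intro b _ hb
        simp [hb]
      · simp
    simp only [h1, Finset.sum_ite_eq', Finset.mem_univ, if_true]
    ring
  have Hbe : (∑ k : Fin n, ∑ l : Fin n,
        (if k = l then pd j f x else 0) * (if l = k then pd i f x else 0))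
      = n * (pd i f x * pd j f x) := by
    have h1 : ∀ k : Fin n, (∑ l, (if k = l then pd j f x else 0) * (if l = k then pd i f x else 0))
        = pd j f x * pd i f x := by
      intro k
      have e : ∀ l : Fin n, (if k = l then pd j f x else 0) * (if l = k then pd i f x else 0)
          = (if l = k then pd j f x * pd i f x else 0) := by
        intro l
        by_cases h : l = k <;> simp [h]
      simp [e, Finset.sum_ite_eq']
    simp only [h1, Finset.sum_const, Finset.card_univ, Fintype.card_fin, nsmul_eq_mul]
    ring
  have Hbf : (∑ k, ∑ l, (if k = l then pd j f x else 0) * (g x i k * tV g f l x))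
      = pd i f x * pd j f x := by
    have h1 : ∀ k, (∑ l, (if k = l then pd j f x else 0) * (g x i k * tV g f l x))
        = pd j f x * (g x i k * tV g f k x) := by
      intro k
      simp [ite_mul, Finset.sum_ite_eq]
    simp only [h1]
    have h2 : (∑ k, pd j f x * (g x i k * tV g f k x))
        = pd j f x * ∑ k, g x i k * tV g f k x := by rw [Finset.mul_sum]
    rw [h2, hgt hgpos]
    ring
  have Hcd : (∑ k, ∑ l, (g x j l * tV g f k x) * (if l = i then pd k f x else 0))
      = g x i j * gradSq g f x := by
    have h1 : ∀ k, (∑ l, (g x j l * tV g f k x) * (if l = i then pd k f x else 0))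
        = g x j i * (pd k f x * tV g f k x) := by
      intro k
      simp [mul_ite, Finset.sum_ite_eq']
      ring
    simp only [h1, ← Finset.mul_sum, hpt hgpos, gsym hgpos j i]
  have Hce : (∑ k, ∑ l, (g x j l * tV g f k x) * (if l = k then pd i f x else 0))
      = pd i f x * pd j f x := by
    have h1 : ∀ k, (∑ l, (g x j l * tV g f k x) * (if l = k then pd i f x else 0))
        = pd i f x * (g x j k * tV g f k x) := by
      intro k
      simp [mul_ite, Finset.sum_ite_eq]
      ring
    simp only [h1, ← Finset.mul_sum, hgt hgpos]
  have Hcf : (∑ k, ∑ l, (g x j l * tV g f k x) * (g x i k * tV g f l x))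
      = pd i f x * pd j f x := by
    have h1 : ∀ k, (∑ l, (g x j l * tV g f k x) * (g x i k * tV g f l x))
        = (g x i k * tV g f k x) * ∑ l, g x j l * tV g f l x := by
      intro k
      rw [Finset.mul_sum]
      exact Finset.sum_congr rfl fun l _ => by ring
    simp only [h1, ← Finset.sum_mul, hgt hgpos]
  simp only [expand, Finset.sum_add_distrib, Finset.sum_sub_distrib]
  rw [Had, Hae, Haf, Hbd, Hbe, Hbf, Hcd, Hce, Hcf]
  ring

lemma QQ_eq : QQ g f x = -(((n : ℝ) - 1) * ((n : ℝ) - 2)) * gradSq g f x := by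
  unfold QQ cC
  have h0 : ∀ i j : Fin n, (g x)⁻¹ i j *
      ((∑ k, ∑ l, pA g f k k l x * pA g f l i j x)
        - ∑ k, ∑ l, pA g f k j l x * pA g f l i k x)
      = ((n : ℝ) - 2) * ((g x)⁻¹ i j * pd i f x * pd j f x)
        + (2 - (n : ℝ)) * gradSq g f x * ((g x)⁻¹ i j * g x i j) := by
    intro i j
    rw [hinner1 hgpos, hinner9 hgpos]
    ring
  simp only [h0, Finset.sum_add_distrib, ← Finset.mul_sum]
  rw [htr hgpos]
  have hgs : ∑ i, ∑ j, (g x)⁻¹ i j * pd i f x * pd j f x = gradSq g f x := rfl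
  rw [hgs]
  ring

end Alg2

section Pos
variable {g : En n → Matrix (Fin n) (Fin n) ℝ} {f : En n → ℝ} {x : En n}
variable (hgpos : ∀ x, (g x).PosDef)
include hgpos

lemma gradSq_eq_dot : gradSq g f x
    = dotProduct (fun i => pd i f x) ((g x)⁻¹.mulVec (fun i => pd i f x)) := by
  unfold gradSq
  rw [dotProduct]
  refine Finset.sum_congr rfl fun i _ => ?_
  simp only [Matrix.mulVec, dotProduct, Finset.mul_sum]
  exact Finset.sum_congr rfl fun j _ => by ring

lemma gradSq_nonneg : 0 ≤ gradSq g f x := by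
  rw [gradSq_eq_dot hgpos]
  have h := ((hgpos x).inv).posSemidef.dotProduct_mulVec_nonneg (fun i => pd i f x)
  simpa using h

lemma gradSq_zero (h : gradSq g f x = 0) (i : Fin n) : pd i f x = 0 := by
  by_contra hne
  have hp : (fun i => pd i f x) ≠ 0 := fun h0 => hne (congrFun h0 i)
  have hpos := ((hgpos x).inv).dotProduct_mulVec_pos hp
  rw [gradSq_eq_dot hgpos] at h
  simp only [star_trivial] at hpos
  rw [h] at hpos
  exact lt_irrefl 0 hpos

end Pos

/-- if `e^{−2βf}((1−β)S + β e^{2f} S̃) ≥ −n(n−1)` pointwise, then the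
scalar curvature `S̄` of `ḡ = e^{2βf}g` satisfies `S̄ ≥ −n(n−1)` pointwise, and (when
`0 < β < 1` and `n ≥ 3`) equality at a point forces `∇f = 0` there. -/
theorem scalarCurv_lower_bound (n : ℕ) (g : En n → Matrix (Fin n) (Fin n) ℝ)
    (f : En n → ℝ) (β : ℝ) (hβ : 0 < β) (hβ1 : β ≤ 1)
    (hg : SmoothMetric g) (hgpos : ∀ x, (g x).PosDef) (hf : ContDiff ℝ (⊤ : ℕ∞) f)
    (gbar gtil : En n → Matrix (Fin n) (Fin n) ℝ)
    (hgbar : ∀ x, gbar x = Real.exp (2 * β * f x) • g x)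
    (hgtil : ∀ x, gtil x = Real.exp (2 * f x) • g x)
    (hS : ∀ x, -(n : ℝ) * ((n : ℝ) - 1) ≤
      Real.exp (-2 * β * f x) *
        ((1 - β) * scalarCurv g x + β * Real.exp (2 * f x) * scalarCurv gtil x)) :
    (∀ x, -(n : ℝ) * ((n : ℝ) - 1) ≤ scalarCurv gbar x) ∧
    (β < 1 → 3 ≤ n → ∀ x, scalarCurv gbar x = -(n : ℝ) * ((n : ℝ) - 1) →
      ∀ i, pd i f x = 0) := by
  have hgb : gbar = fun y => Real.exp (2*β*f y) • g y := funext hgbar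
  have hgt2 : gtil = fun y => Real.exp (2*(1:ℝ)*f y) • g y := by
    funext y
    rw [hgtil y]
    norm_num
  have Sbar : ∀ x, scalarCurv gbar x
      = Real.exp (-(2*β*f x)) * (scalarCurv g x + β * LL g f x + β^2 * QQ g f x) := by
    intro x
    rw [hgb]
    exact scalar_conf hg hgpos hf β x
  have Stil : ∀ x, scalarCurv gtil x
      = Real.exp (-(2*(1:ℝ)*f x)) *
          (scalarCurv g x + 1 * LL g f x + (1:ℝ)^2 * QQ g f x) := by
    intro x
    rw [hgt2]
    exact scalar_conf hg hgpos hf 1 x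
  set c : ℝ := ((n : ℝ) - 1) * ((n : ℝ) - 2) with hc_def
  have key : ∀ x, scalarCurv gbar x
      = Real.exp (-2*β*f x) *
          ((1 - β) * scalarCurv g x + β * Real.exp (2*f x) * scalarCurv gtil x)
        + Real.exp (-2*β*f x) * (β * (1 - β) * (c * gradSq g f x)) := by
    intro x
    rw [Sbar x, Stil x, QQ_eq hgpos,
      show Real.exp (-(2*β*f x)) = Real.exp (-2*β*f x) from by norm_num,
      show Real.exp (-(2*(1:ℝ)*f x)) = Real.exp (-(2*f x)) from by norm_num]
    have h1 : Real.exp (2*f x) * Real.exp (-(2*f x)) = 1 := by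
      rw [← Real.exp_add]; norm_num
    rw [hc_def]
    linear_combination (-(Real.exp (-2*β*f x) * β *
      (scalarCurv g x + LL g f x - (((n:ℝ)-1)*((n:ℝ)-2)) * gradSq g f x))) * h1
  have hcnn : 0 ≤ c := by
    rw [hc_def]
    rcases Nat.lt_or_ge n 2 with h | h
    · interval_cases n <;> norm_num
    · have h2 : (2:ℝ) ≤ (n:ℝ) := by exact_mod_cast h
      nlinarith
  constructor
  · intro x
    have t1 := hS x
    have t2 : 0 ≤ Real.exp (-2*β*f x) * (β * (1 - β) * (c * gradSq g f x)) := by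
      apply mul_nonneg (Real.exp_pos _).le
      apply mul_nonneg (mul_nonneg hβ.le (by linarith))
      exact mul_nonneg hcnn (gradSq_nonneg hgpos)
    rw [key x]
    linarith
  · intro hβlt hn3 x hEq i
    have t1 := hS x
    have hcpos : 0 < c := by
      rw [hc_def]
      have h3 : (3:ℝ) ≤ (n:ℝ) := by exact_mod_cast hn3
      nlinarith
    have t2 : Real.exp (-2*β*f x) * (β * (1 - β) * (c * gradSq g f x)) = 0 := by
      have hnn : 0 ≤ Real.exp (-2*β*f x) * (β * (1 - β) * (c * gradSq g f x)) := by
        apply mul_nonneg (Real.exp_pos _).le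
        apply mul_nonneg (mul_nonneg hβ.le (by linarith))
        exact mul_nonneg hcnn (gradSq_nonneg hgpos)
      have := key x
      rw [hEq] at this
      linarith
    have hGs : gradSq g f x = 0 := by
      have hE := Real.exp_pos (-2*β*f x)
      have hgs := gradSq_nonneg (g := g) (f := f) (x := x) hgpos
      by_contra hne
      have hgt0 : 0 < gradSq g f x := lt_of_le_of_ne hgs (Ne.symm hne)
      have : 0 < Real.exp (-2*β*f x) * (β * (1 - β) * (c * gradSq g f x)) := by
        apply mul_pos hE
        apply mul_pos (mul_pos hβ (by linarith))
        exact mul_pos hcpos hgt0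
      linarith
    exact gradSq_zero hgpos hGs i
end
end
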